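/- Let N ≥ 1, let 𝒞 ⊆ {0,1}^N be a finite nonempty set, and let μ be a probability distribution on 𝒞 with max_{c∈𝒞} μ(c) ≤ 5/6. Let A ≥ 1 be such that for every matrix Γ ∈ ℝ^{𝒞×𝒞} with nonnegative entries and zeros on the diagonal, ‖Γ‖ ≤ A · max_{i∈[N]} ‖Γ ∘ D_i‖. Then there exists an index i ∈ [N] such that the binary entropy of p_i := μ({c : c_i = 1}) satisfies H(p_i) ≥ (1/(36A²))·log₂(36A²). -/

import Mathlib

/-- The ℓ₂→ℓ₂ operator norm (largest singular value) of a real matrix. -/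
noncomputable def l2OpNorm {α β : Type*} [Fintype α] [Fintype β] [DecidableEq β]
    (M : Matrix α β ℝ) : ℝ :=
  ‖LinearMap.toContinuousLinearMap (Matrix.toEuclideanLin M)‖

/-- The 0/1 matrix `D_i` whose `(c,c')` entry is 1 iff `c_i ≠ c'_i`. -/
def Dmat {N : ℕ} (𝒞 : Finset (Fin N → Bool)) (i : Fin N) :
    Matrix {c // c ∈ 𝒞} {c // c ∈ 𝒞} ℝ :=
  Matrix.of fun c c' => if (c : Fin N → Bool) i = (c' : Fin N → Bool) i then 0 else 1

/-- The binary entropy `H(p) = −p·log₂ p − (1−p)·log₂(1−p)` (with `H(0) = H(1) = 0`,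
which holds automatically since `Real.logb 2 0 = 0`). -/
noncomputable def binEnt (p : ℝ) : ℝ :=
  -p * Real.logb 2 p - (1 - p) * Real.logb 2 (1 - p)


/-!
Take `Γ = √μ √μᵀ` with its diagonal removed. The test vector `√μ` gives
`‖Γ‖ ≥ 1 - ∑ μ(c)² ≥ 1/6`. For each `i`, `Γ ∘ D_i = u vᵀ + v uᵀ`, where `u`, `v` are the parts
of `√μ` supported on `c_i = 1` and `c_i = 0`; as `u ⊥ v`, its norm is
`‖u‖ ‖v‖ = √(p_i (1 - p_i))`. Hence some `i` has `p_i (1 - p_i) ≥ t := 1/(36A²)`, so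
`min(p_i, 1 - p_i) ≥ t`, and as `H` increases on `[0, 1/2]`, `H(p_i) ≥ H(t) ≥ t log₂(1/t)`.
-/

open Matrix Finset Real

section CrossOuter

variable {α β : Type*} [DecidableEq β]

def crossOuter (f : α → β) (s : α → ℝ) : Matrix α α ℝ :=
  of fun c c' => if f c = f c' then 0 else s c * s c'

lemma crossOuter_apply_self (f : α → β) (s : α → ℝ) (c : α) : crossOuter f s c c = 0 := by
  simp [crossOuter]

lemma crossOuter_nonneg {s : α → ℝ} (hs : ∀ c, 0 ≤ s c) (f : α → β) (c c' : α) :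
    0 ≤ crossOuter f s c c' := by
  rw [crossOuter, of_apply]
  split_ifs
  exacts [le_rfl, mul_nonneg (hs c) (hs c')]

variable [Fintype α]

lemma crossOuter_mulVec_apply (f : α → Bool) (s x : α → ℝ) (c : α) :
    (crossOuter f s *ᵥ x) c = s c * ∑ c' with f c' = !f c, s c' * x c' := by
  simp only [mulVec, dotProduct, crossOuter, of_apply, sum_filter, mul_sum]
  refine sum_congr rfl fun c' _ => ?_
  cases f c <;> cases f c' <;> simp [mul_assoc]

variable [DecidableEq α]

lemma dotProduct_crossOuter_id_mulVec (s : α → ℝ) :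
    s ⬝ᵥ crossOuter id s *ᵥ s = (s ⬝ᵥ s) ^ 2 - ∑ c, s c ^ 4 := by
  have h : crossOuter id s = vecMulVec s s - diagonal fun c => s c ^ 2 := by
    ext c c'
    by_cases hcc : c = c' <;> simp [crossOuter, vecMulVec, diagonal, hcc, sq]
  rw [h, sub_mulVec, dotProduct_sub, vecMulVec_mulVec]
  simp [dotProduct, mulVec_diagonal, sum_mul, pow_succ, mul_assoc]

end CrossOuter

section OperatorNorm

variable {α : Type*} [Fintype α] [DecidableEq α]

lemma l2OpNorm_nonneg (M : Matrix α α ℝ) : 0 ≤ l2OpNorm M := norm_nonneg _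

lemma dotProduct_mulVec_le_l2OpNorm_mul (M : Matrix α α ℝ) (v : α → ℝ) :
    v ⬝ᵥ M *ᵥ v ≤ l2OpNorm M * (v ⬝ᵥ v) := by
  set w : EuclideanSpace ℝ α := WithLp.toLp 2 v
  have hw : ‖w‖ ^ 2 = v ⬝ᵥ v := by
    rw [EuclideanSpace.real_norm_sq_eq]
    simp [w, dotProduct, sq]
  calc v ⬝ᵥ M *ᵥ v = inner ℝ w (toEuclideanCLM (𝕜 := ℝ) M w) := (inner_toEuclideanCLM M w w).symm
    _ ≤ ‖w‖ * ‖toEuclideanCLM (𝕜 := ℝ) M w‖ := real_inner_le_norm _ _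
    _ ≤ ‖w‖ * (l2OpNorm M * ‖w‖) := by gcongr; exact ContinuousLinearMap.le_opNorm _ _
    _ = l2OpNorm M * (v ⬝ᵥ v) := by rw [← hw]; ring

lemma l2OpNorm_le_of_sum_sq_mulVec_le (M : Matrix α α ℝ) {C : ℝ} (hC : 0 ≤ C)
    (h : ∀ x : α → ℝ, ∑ c, (M *ᵥ x) c ^ 2 ≤ C ^ 2 * ∑ c, x c ^ 2) : l2OpNorm M ≤ C := by
  refine ContinuousLinearMap.opNorm_le_bound _ hC fun x => ?_
  rw [← pow_le_pow_iff_left₀ (norm_nonneg _) (by positivity) two_ne_zero, mul_pow,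
    EuclideanSpace.real_norm_sq_eq, EuclideanSpace.real_norm_sq_eq]
  exact h x

end OperatorNorm

section CrossOuterNorm

variable {α : Type*} [Fintype α]

lemma sum_eq_sum_filter_true_add_sum_filter_false (f : α → Bool) (g : α → ℝ) :
    ∑ c, g c = ∑ c with f c = true, g c + ∑ c with f c = false, g c := by
  rw [← sum_fiberwise univ f g, Fintype.sum_bool]

variable [DecidableEq α]

lemma l2OpNorm_crossOuter_le (f : α → Bool) (s : α → ℝ) :
    l2OpNorm (crossOuter f s) ≤
      √((∑ c with f c = true, s c ^ 2) * ∑ c with f c = false, s c ^ 2) := by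
  set m : Bool → ℝ := fun b => ∑ c with f c = b, s c ^ 2
  have hm : ∀ b, 0 ≤ m b := fun b => sum_nonneg fun c _ => sq_nonneg _
  refine l2OpNorm_le_of_sum_sq_mulVec_le _ (sqrt_nonneg _) fun x => ?_
  set T : Bool → ℝ := fun b => ∑ c with f c = b, s c * x c
  set X : Bool → ℝ := fun b => ∑ c with f c = b, x c ^ 2
  have hCS : ∀ b, T b ^ 2 ≤ m b * X b := fun b => sum_mul_sq_le_sq_mul_sq _ _ _
  have hMx : ∑ c, (crossOuter f s *ᵥ x) c ^ 2 = m true * T false ^ 2 + m false * T true ^ 2 := by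
    simp only [sum_eq_sum_filter_true_add_sum_filter_false f, crossOuter_mulVec_apply, mul_pow,
      m, T, sum_mul]
    congr 1 <;> refine sum_congr rfl fun c hc => ?_ <;> rw [(mem_filter.1 hc).2] <;> rfl
  rw [sq_sqrt (mul_nonneg (hm _) (hm _)), hMx, sum_eq_sum_filter_true_add_sum_filter_false f]
  calc m true * T false ^ 2 + m false * T true ^ 2
      ≤ m true * (m false * X false) + m false * (m true * X true) :=
        add_le_add (mul_le_mul_of_nonneg_left (hCS false) (hm true))
          (mul_le_mul_of_nonneg_left (hCS true) (hm false))
    _ = m true * m false * (X true + X false) := by ring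

end CrossOuterNorm

lemma hadamard_crossOuter_id_Dmat {N : ℕ} (𝒞 : Finset (Fin N → Bool))
    (s : {c // c ∈ 𝒞} → ℝ) (i : Fin N) :
    (of fun c c' => crossOuter id s c c' * Dmat 𝒞 i c c') =
      crossOuter (fun c : {c // c ∈ 𝒞} => (c : Fin N → Bool) i) s := by
  ext c c'
  by_cases h : (c : Fin N → Bool) i = (c' : Fin N → Bool) i
  · simp [crossOuter, Dmat, h]
  · have hcc : c ≠ c' := by rintro rfl; exact h rfl
    simp [crossOuter, Dmat, h, hcc]

lemma sum_sq_le_of_le {α : Type*} [Fintype α] {μ : α → ℝ} {m : ℝ} (hμ0 : ∀ c, 0 ≤ μ c)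
    (hμ1 : ∑ c, μ c = 1) (hμm : ∀ c, μ c ≤ m) : ∑ c, μ c ^ 2 ≤ m :=
  calc ∑ c, μ c ^ 2 ≤ ∑ c, m * μ c :=
        sum_le_sum fun c _ => by rw [sq]; exact mul_le_mul_of_nonneg_right (hμm c) (hμ0 c)
    _ = m := by rw [← mul_sum, hμ1, mul_one]

section SqrtWeights

variable {α : Type*} [Fintype α] [DecidableEq α] {μ : α → ℝ}

lemma one_sub_le_l2OpNorm_crossOuter_id_sqrt (hμ0 : ∀ c, 0 ≤ μ c) (hμ1 : ∑ c, μ c = 1)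
    {m : ℝ} (hμm : ∀ c, μ c ≤ m) : 1 - m ≤ l2OpNorm (crossOuter id fun c => √(μ c)) := by
  set s : α → ℝ := fun c => √(μ c)
  have hs : ∀ c, s c ^ 2 = μ c := fun c => sq_sqrt (hμ0 c)
  have hss : s ⬝ᵥ s = 1 := by simpa only [dotProduct, ← sq, hs] using hμ1
  have h4 : ∑ c, s c ^ 4 = ∑ c, μ c ^ 2 := by simp only [← hs, ← pow_mul]
  have := dotProduct_mulVec_le_l2OpNorm_mul (crossOuter id s) s
  rw [dotProduct_crossOuter_id_mulVec, hss, h4] at this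
  linarith [sum_sq_le_of_le hμ0 hμ1 hμm]

lemma l2OpNorm_crossOuter_sqrt_le (f : α → Bool) (hμ0 : ∀ c, 0 ≤ μ c) (hμ1 : ∑ c, μ c = 1) :
    l2OpNorm (crossOuter f fun c => √(μ c)) ≤
      √((∑ c, if f c = true then μ c else 0) * (1 - ∑ c, if f c = true then μ c else 0)) := by
  have hs : ∀ c, √(μ c) ^ 2 = μ c := fun c => sq_sqrt (hμ0 c)
  have hp : ∑ c with f c = true, √(μ c) ^ 2 = ∑ c, if f c = true then μ c else 0 := by
    simp only [hs, sum_filter]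
  have hq : ∑ c with f c = false, √(μ c) ^ 2 = 1 - ∑ c, if f c = true then μ c else 0 := by
    rw [← hμ1, sum_eq_sum_filter_true_add_sum_filter_false f, ← hp]
    simp only [hs]
    ring
  simpa only [hp, hq] using l2OpNorm_crossOuter_le f fun c => √(μ c)

end SqrtWeights

lemma exists_le_mul_of_le_mul_iSup {ι : Type*} [Finite ι] {g : ι → ℝ} {x A : ℝ}
    (hx : 0 < x) (h : x ≤ A * ⨆ i, g i) : ∃ i, x ≤ A * g i := by
  cases isEmpty_or_nonempty ι
  · rw [Real.iSup_of_isEmpty, mul_zero] at h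
    exact absurd h hx.not_ge
  · obtain ⟨i, hi⟩ := exists_eq_ciSup_of_finite (f := g)
    exact ⟨i, hi ▸ h⟩

lemma mul_log_inv_le_binEntropy {t p : ℝ} (ht : 0 ≤ t) (htp : t ≤ p * (1 - p)) :
    t * log t⁻¹ ≤ binEntropy p := by
  wlog hp : p ≤ 2⁻¹ generalizing p
  · rw [← binEntropy_one_sub]
    exact this (by linarith) (by linarith)
  have hp0 : 0 ≤ p := by nlinarith
  have htp' : t ≤ p := by nlinarith
  calc t * log t⁻¹ ≤ binEntropy t := by
        rw [binEntropy, le_add_iff_nonneg_right, log_inv]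
        exact mul_nonneg (by linarith) (neg_nonneg.2 (log_nonpos (by linarith) (by linarith)))
    _ ≤ binEntropy p :=
        binEntropy_strictMonoOn.monotoneOn ⟨ht, htp'.trans hp⟩ ⟨hp0, hp⟩ htp'

lemma binEnt_eq_binEntropy_div_log_two (p : ℝ) : binEnt p = binEntropy p / log 2 := by
  simp only [binEnt, binEntropy, logb, log_inv]
  ring

lemma mul_logb_inv_le_binEnt {t p : ℝ} (ht : 0 ≤ t) (htp : t ≤ p * (1 - p)) :
    t * logb 2 t⁻¹ ≤ binEnt p := by
  rw [binEnt_eq_binEntropy_div_log_two, logb, ← mul_div_assoc]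
  exact div_le_div_of_nonneg_right (mul_log_inv_le_binEntropy ht htp) (log_nonneg one_le_two)

theorem exists_high_entropy_query_general {N : ℕ}
    (𝒞 : Finset (Fin N → Bool))
    (μ : {c // c ∈ 𝒞} → ℝ) (hμ0 : ∀ c, 0 ≤ μ c) (hμ1 : ∑ c, μ c = 1)
    (hμmax : ∀ c, μ c ≤ 5 / 6)
    (A : ℝ)
    (hadv : ∀ Γ : Matrix {c // c ∈ 𝒞} {c // c ∈ 𝒞} ℝ,
      (∀ c c', 0 ≤ Γ c c') → (∀ c, Γ c c = 0) →
      l2OpNorm Γ ≤ A * ⨆ i : Fin N,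
        l2OpNorm (Matrix.of fun c c' => Γ c c' * Dmat 𝒞 i c c')) :
    ∃ i : Fin N,
      (1 / (36 * A ^ 2)) * Real.logb 2 (36 * A ^ 2) ≤
        binEnt (∑ c : {c // c ∈ 𝒞}, if (c : Fin N → Bool) i = true then μ c else 0) := by
  have hΓ := (one_sub_le_l2OpNorm_crossOuter_id_sqrt hμ0 hμ1 hμmax).trans
    (hadv _ (crossOuter_nonneg (fun c => sqrt_nonneg _) _) (crossOuter_apply_self _ _))
  obtain ⟨i, hi⟩ := exists_le_mul_of_le_mul_iSup (by norm_num) hΓ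
  rw [hadamard_crossOuter_id_Dmat] at hi
  refine ⟨i, ?_⟩
  have hcut := l2OpNorm_crossOuter_sqrt_le (fun c : {c // c ∈ 𝒞} => (c : Fin N → Bool) i) hμ0 hμ1
  set p := ∑ c : {c // c ∈ 𝒞}, if (c : Fin N → Bool) i = true then μ c else 0
  have hA : 0 < A := pos_of_mul_pos_left (by linarith) (l2OpNorm_nonneg _)
  have h6 : 1 / (6 * A) ≤ √(p * (1 - p)) := by
    rw [div_le_iff₀ (by positivity)]
    nlinarith
  have ht : 1 / (36 * A ^ 2) ≤ p * (1 - p) := by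
    convert (le_sqrt' (by positivity)).1 h6 using 1
    ring
  simpa only [one_div, inv_inv] using mul_logb_inv_le_binEnt (by positivity) ht

/-- **Entropic balanced-query lemma.** Let `𝒞 ⊆ {0,1}^N` be finite and nonempty, `μ` a
probability distribution on `𝒞` with `max_c μ(c) ≤ 5/6`, and `A ≥ 1` such that every
nonnegative matrix `Γ` with zero diagonal satisfies `‖Γ‖ ≤ A · max_i ‖Γ ∘ D_i‖`. Then
some index `i ∈ [N]` satisfies `H(μ(C_i = 1)) ≥ (1/(36A²))·log₂(36A²)`. -/
theorem exists_high_entropy_query {N : ℕ} (hN : 1 ≤ N)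
    (𝒞 : Finset (Fin N → Bool)) (h𝒞 : 𝒞.Nonempty)
    (μ : {c // c ∈ 𝒞} → ℝ) (hμ0 : ∀ c, 0 ≤ μ c) (hμ1 : ∑ c, μ c = 1)
    (hμmax : ∀ c, μ c ≤ 5 / 6)
    (A : ℝ) (hA : 1 ≤ A)
    (hadv : ∀ Γ : Matrix {c // c ∈ 𝒞} {c // c ∈ 𝒞} ℝ,
      (∀ c c', 0 ≤ Γ c c') → (∀ c, Γ c c = 0) →
      l2OpNorm Γ ≤ A * ⨆ i : Fin N,
        l2OpNorm (Matrix.of fun c c' => Γ c c' * Dmat 𝒞 i c c')) :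
    ∃ i : Fin N,
      (1 / (36 * A ^ 2)) * Real.logb 2 (36 * A ^ 2) ≤
        binEnt (∑ c : {c // c ∈ 𝒞}, if (c : Fin N → Bool) i = true then μ c else 0) :=
  exists_high_entropy_query_general 𝒞 μ hμ0 hμ1 hμmax A hadv
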